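/- Let a ∈ (0,1) and let f_a(z) = (a+z)/(1+az) with Taylor coefficients a₀ = a and a_k = (1−a²)(−a)^{k−1} for k ≥ 1. Then for every r ∈ (0,1), Σ_{k=2}^∞ |a_k| φ_k(r) = a(1+a)·φ₂(r) − (1+a)·φ₂(ar), where φ₂(s) = −(1/s)log(1−s) − 1 − s/2 for s ∈ (0,1). -/

import Mathlib

open Set

/-- `φ_k(r) = Σ_{i=k}^∞ r^i/(i+1)`. -/
noncomputable def phi (k : ℕ) (r : ℝ) : ℝ :=
  ∑' i : ℕ, r ^ (k + i) / (k + i + 1)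

lemma key (s : ℝ) (hs0 : 0 < s) (hs1 : s < 1) :
    HasSum (fun n : ℕ => s ^ (n + 2) / (n + 3))
      (-(1 / s) * Real.log (1 - s) - 1 - s / 2) := by
  have hs : s ≠ 0 := ne_of_gt hs0
  have h := Real.hasSum_pow_div_log_of_abs_lt_one (by rw [abs_of_pos hs0]; exact hs1)
  have h2 := (hasSum_nat_add_iff' (f := fun n : ℕ => s ^ (n + 1) / ((n:ℝ) + 1)) 2).mpr h
  have h3 := h2.div_const s
  convert h3 using 1
  · rfl
  · funext n
    push_cast
    rw [div_div, pow_succ]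
    have h3 : (n:ℝ) + 3 ≠ 0 := by positivity
    field_simp
    ring
  · norm_num [Finset.sum_range_succ]
    field_simp
    ring

set_option maxHeartbeats 1000000 in
theorem stmt18 (a r : ℝ) (ha : a ∈ Ioo (0:ℝ) 1) (hr : r ∈ Ioo (0:ℝ) 1) :
    ∑' k : ℕ, |(1 - a ^ 2) * (-a) ^ (k + 1)| * phi (k + 2) r
      = a * (1 + a) * (-(1 / r) * Real.log (1 - r) - 1 - r / 2)
        - (1 + a) * (-(1 / (a * r)) * Real.log (1 - a * r) - 1 - (a * r) / 2) := by
  obtain ⟨ha0, ha1⟩ := ha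
  obtain ⟨hr0, hr1⟩ := hr
  have hc : (0:ℝ) < 1 - a ^ 2 := by nlinarith
  set u : ℕ → ℝ := fun k => (1 - a ^ 2) * a ^ (k + 1) with hu
  set g : ℕ → ℝ := fun n => r ^ (n + 2) / ((n:ℝ) + 3) with hg
  have hgpos : ∀ n, 0 ≤ g n := fun n => by positivity
  have hupos : ∀ k, 0 ≤ u k := fun k => by positivity
  set F : ℕ → ℕ → ℝ := fun k n => if k ≤ n then u k * g n else 0 with hF
  -- Step 0: the absolute value
  have habs : ∀ k : ℕ, |(1 - a ^ 2) * (-a) ^ (k + 1)| = u k := by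
    intro k
    rw [abs_mul, abs_pow, abs_neg, abs_of_pos ha0, abs_of_pos hc]
  -- Step 1: each term as a tsum of F
  have hstep1 : ∀ k : ℕ, u k * phi (k + 2) r = ∑' n : ℕ, F k n := by
    intro k
    have hinj : Function.Injective (fun i : ℕ => k + i) := fun x y h => by simpa using h
    have hsupp : Function.support (F k) ⊆ Set.range (fun i : ℕ => k + i) := by
      intro n hn
      have hkn : k ≤ n := by
        by_contra h
        simp [hF, h] at hn
      exact ⟨n - k, Nat.add_sub_cancel' hkn⟩
    rw [← hinj.tsum_eq hsupp]
    simp only [phi]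
    rw [← tsum_mul_left]
    congr 1
    funext i
    have hk : k ≤ k + i := Nat.le_add_right k i
    simp only [hF, if_pos hk, hg, hu]
    push_cast
    ring_nf
  -- Step 2: summability of uncurried F
  have hsumF : Summable (Function.uncurry F) := by
    have hB : Summable (fun p : ℕ × ℕ => ((1 - a ^ 2) * a ^ (p.1 + 1)) * r ^ p.2) := by
      have hf : Summable (fun k : ℕ => (1 - a ^ 2) * a ^ (k + 1)) :=
        ((summable_geometric_of_lt_one ha0.le ha1).mul_left ((1 - a^2) * a)).congr
          (fun k => by ring)
      have hg2 : Summable (fun n : ℕ => r ^ n) := summable_geometric_of_lt_one hr0.le hr1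
      have h1 : (0:ℕ → ℝ) ≤ (fun k : ℕ => (1 - a ^ 2) * a ^ (k + 1)) :=
        fun k => mul_nonneg hc.le (by positivity)
      have h2 : (0:ℕ → ℝ) ≤ (fun n : ℕ => r ^ n) := fun n => by positivity
      exact Summable.mul_of_nonneg hf hg2 h1 h2
    apply Summable.of_nonneg_of_le _ _ hB
    · intro p
      unfold Function.uncurry
      by_cases h : p.1 ≤ p.2 <;> simp [hF, h]
      positivity
    · intro p
      unfold Function.uncurry
      by_cases h : p.1 ≤ p.2
      · simp only [hF, if_pos h]
        apply mul_le_mul_of_nonneg_left _ (hupos p.1)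
        calc g p.2 ≤ r ^ (p.2 + 2) := by
              apply div_le_self (by positivity)
              have h0 : (0:ℝ) ≤ (p.2:ℝ) := Nat.cast_nonneg _
              linarith
          _ = r ^ p.2 * r ^ 2 := by ring
          _ ≤ r ^ p.2 * 1 := by
              apply mul_le_mul_of_nonneg_left _ (by positivity)
              nlinarith
          _ = r ^ p.2 := by ring
      · simp only [hF, if_neg h]
        positivity
  -- Step 3: swap sums
  have hswap : ∑' k : ℕ, ∑' n : ℕ, F k n = ∑' n : ℕ, ∑' k : ℕ, F k n :=
    (Summable.tsum_comm (f := F) hsumF).symm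
  -- Step 4: inner sum
  have hstep4 : ∀ n : ℕ, ∑' k : ℕ, F k n = (1 + a) * (a - a ^ (n + 2)) * g n := by
    intro n
    rw [tsum_eq_sum (s := Finset.range (n + 1)) (by
      intro k hk
      have : ¬ k ≤ n := by simp at hk; omega
      simp [hF, this])]
    have : ∀ k ∈ Finset.range (n + 1), F k n = (1 - a^2) * a * a ^ k * g n := by
      intro k hk
      have hk' : k ≤ n := by simp at hk; omega
      simp only [hF, if_pos hk', hu]
      ring
    rw [Finset.sum_congr rfl this]
    rw [← Finset.sum_mul, ← Finset.mul_sum]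
    rw [geom_sum_eq (ne_of_lt ha1)]
    have h1 : a - 1 ≠ 0 := by intro h; apply ne_of_lt ha1; linarith
    field_simp
    ring
  -- Step 5: conclude
  have hA := (key r hr0 hr1).mul_left ((1 + a) * a)
  have hB := (key (a * r) (by positivity) (by nlinarith)).mul_left (1 + a)
  have hfinal : HasSum (fun n : ℕ => (1 + a) * (a - a ^ (n + 2)) * g n)
      (a * (1 + a) * (-(1 / r) * Real.log (1 - r) - 1 - r / 2)
        - (1 + a) * (-(1 / (a * r)) * Real.log (1 - a * r) - 1 - (a * r) / 2)) := by
    have := hA.sub hB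
    convert this using 1
    · rfl
    · funext n
      simp only [hg]
      rw [mul_pow]
      ring
    · ring
  calc ∑' k : ℕ, |(1 - a ^ 2) * (-a) ^ (k + 1)| * phi (k + 2) r
      = ∑' k : ℕ, ∑' n : ℕ, F k n := by
        congr 1; funext k; rw [habs k, hstep1 k]
    _ = ∑' n : ℕ, ∑' k : ℕ, F k n := hswap
    _ = ∑' n : ℕ, (1 + a) * (a - a ^ (n + 2)) * g n := by
        congr 1; funext n; exact hstep4 n
    _ = _ := hfinal.tsum_eq
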